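/- Given a well-founded order ≻_B on base types, let ≻_T be the smallest order on simple types containing ≻_B and the right argument relation ⊳_r such that V ≻_T V' implies U → V ≻_T U → V' for all types U, V, V'. Then ≻_T is admissible. -/
import Mathlib


namespace HRS

/-- Simple types over a set `B` of base types. -/
inductive Ty (B : Type) : Type
  | base : B → Ty B
  | arrow : Ty B → Ty B → Ty B

namespace Ty

variable {B : Type}

/-- The left argument relation: `T → U ⊳ₗ T`. -/
def LeftArg (S T : Ty B) : Prop := ∃ U, S = Ty.arrow T U

/-- The right argument relation: `T → U ⊳ᵣ U`. -/
def RightArg (S U : Ty B) : Prop := ∃ T, S = Ty.arrow T U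

/-- The list of argument types `T₁, …, Tₙ` of `T₁ → ⋯ → Tₙ → a`. -/
def args : Ty B → List (Ty B)
  | base _ => []
  | arrow U V => U :: args V

/-- The target (rightmost) type of a simple type. -/
def target : Ty B → Ty B
  | base a => base a
  | arrow _ V => target V

/-- Removing the first `n` argument types. -/
def dropArgs : ℕ → Ty B → Ty B
  | 0, T => T
  | _+1, base a => base a
  | n+1, arrow _ V => dropArgs n V

/-- The set of base types occurring in a simple type. -/
def basesIn : Ty B → Set B
  | base a => {a}
  | arrow U V => basesIn U ∪ basesIn V

/-- Positions of the base type `a` in a type (strings over {1,2}; `false` = 1, `true` = 2). -/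
def posOf (a : B) : Ty B → Set (List Bool)
  | base b => {p | p = [] ∧ b = a}
  | arrow U V => (fun p => false :: p) '' posOf a U ∪ (fun p => true :: p) '' posOf a V

mutual
/-- Positive base type positions. -/
def posP : Ty B → Set (List Bool)
  | base _ => {[]}
  | arrow U V => (fun p => false :: p) '' posN U ∪ (fun p => true :: p) '' posP V
/-- Negative base type positions. -/
def posN : Ty B → Set (List Bool)
  | base _ => ∅
  | arrow U V => (fun p => false :: p) '' posP U ∪ (fun p => true :: p) '' posN V
end

mutual
/-- Positions for the computability property (comp-sn). -/
def spos (a : B) : Ty B → Set (List Bool)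
  | base _ => ∅
  | arrow U V => (fun p => false :: p) '' npos a U ∪ (fun p => true :: p) '' spos a V
/-- Positions for the computability property (comp-neutral). -/
def npos (a : B) : Ty B → Set (List Bool)
  | base _ => ∅
  | arrow U V => (fun p => false :: p) '' spos a U ∪
      (fun p => true :: p) '' (lpos a V ∪
        (match V with
         | base b => {p | p = [] ∧ b = a}
         | arrow _ _ => npos a V))
/-- Positions for the computability property (comp-lam). -/
def lpos (a : B) : Ty B → Set (List Bool)
  | base _ => ∅
  | arrow U V => (fun p => false :: p) '' (spos a U ∪ npos a U) ∪
      (fun p => true :: p) '' (lpos a V ∪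
        (match V with
         | base b => {p | p = [] ∧ b = a}
         | arrow _ _ => npos a V))
end

/-- Positions for the computability property (comp-small). -/
def cpos (a : B) : Ty B → Set (List Bool)
  | base b => {p | p = [] ∧ b = a}
  | arrow U V => npos a (arrow U V)

end Ty
/-- An abstract presentation of the simply-typed lambda terms (modulo α-renaming)
over base types `B`, function symbols `F` (with fixed arities) and variables `V`,
together with substitutions, βη-reduction and βη-normal forms. -/
structure LC (B F V : Type) where
  /-- well-typed lambda terms (α-equivalence classes) -/
  Term : Type
  /-- substitutions (type-preserving, finite domain, applied capture-avoidingly) -/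
  Sub : Type
  /-- variable terms -/
  var : V → Term
  /-- applied function symbols `f(t₁,…,t_{ar f})` -/
  fapp : F → List Term → Term
  /-- application -/
  app : Term → Term → Term
  /-- abstraction -/
  lam : V → Term → Term
  /-- arity of a function symbol -/
  arity : F → ℕ
  /-- the type `τ(t)` of a term -/
  ty : Term → Ty B
  /-- the type of a variable -/
  tyV : V → Ty B
  /-- the type of a function symbol -/
  tyF : F → Ty B
  /-- free variables -/
  fv : Term → Set V
  /-- βη-normal terms -/
  NF : Term → Prop
  /-- the (unique) βη-normal form `t↓` -/
  nf : Term → Term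
  /-- capture-avoiding application of a substitution -/
  sapp : Sub → Term → Term
  /-- the value `σ(x)` of a substitution on a variable -/
  svar : Sub → V → Term
  /-- the domain of a substitution -/
  dom : Sub → Set V
  /-- the free variables of a substitution -/
  fvS : Sub → Set V
  /-- single capture-avoiding substitution `t[x/s]` -/
  sub1 : Term → V → Term → Term
  /-- β-reduction -/
  beta : Term → Term → Prop
  /-- η-reduction -/
  eta : Term → Term → Prop
  /-- contexts (terms with exactly one hole), as functions replacing the hole -/
  IsCtx : (Term → Term) → Prop

namespace LC

variable {B F V : Type} (L : LC B F V)

/-- βη-reduction. -/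
def be : L.Term → L.Term → Prop := fun s t => L.beta s t ∨ L.eta s t

/-- a substitution is away from a set `X` of variables -/
def away (σ : L.Sub) (X : Set V) : Prop := (L.dom σ ∪ L.fvS σ) ∩ X = ∅

/-- a βη-normal substitution -/
def NFSub (σ : L.Sub) : Prop := ∀ x, L.NF (L.svar σ x)

/-- iterated application `t s₁ ⋯ sₙ` -/
def appList : L.Term → List L.Term → L.Term := fun t ts => ts.foldl L.app t

/-- Nonversatile terms (Definition 3): a βη-normal term is nonversatile if it is an
applied function symbol, or an application `u v` such that `(u v)σ↓ = (uσ↓)(vσ↓)`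
for all substitutions `σ`, or an abstraction `λx.u` such that `(λx.u)σ↓ = λx.(uσ↓)`
for all substitutions `σ` (away from the bound variable).  No variable is nonversatile. -/
def Nonversatile (t : L.Term) : Prop :=
  L.NF t ∧
  ((∃ f ts, ts.length = L.arity f ∧ t = L.fapp f ts) ∨
   (∃ u v, t = L.app u v ∧
      ∀ σ : L.Sub, L.nf (L.sapp σ t) = L.app (L.nf (L.sapp σ u)) (L.nf (L.sapp σ v))) ∨
   (∃ x u, t = L.lam x u ∧
      ∀ σ : L.Sub, L.away σ {x} → L.nf (L.sapp σ t) = L.lam x (L.nf (L.sapp σ u))))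

end LC

/-- The immediate subterm relation (modulo α-renaming: the immediate subterm of an
abstraction is obtained via a fresh variable). -/
inductive LC.ISub {B F V : Type} (L : LC B F V) : L.Term → L.Term → Prop
  | fapp {f : F} {ts : List L.Term} {t : L.Term} :
      ts.length = L.arity f → t ∈ ts → LC.ISub L (L.fapp f ts) t
  | appl {t s : L.Term} : LC.ISub L (L.app t s) t
  | appr {t s : L.Term} : LC.ISub L (L.app t s) s
  | lam {x z : V} {t : L.Term} : z ∉ L.fv t → L.tyV z = L.tyV x →
      LC.ISub L (L.lam x t) (L.sub1 t x (L.var z))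

/-- The subterm relation `⊵`. -/
def LC.Subterm {B F V : Type} (L : LC B F V) : L.Term → L.Term → Prop :=
  Relation.ReflTransGen (LC.ISub L)

/-- `s ⊳ᵇ t`: `t` is a proper subterm of the nonversatile term `s`, reachable through
nonversatile intermediate terms in the recursive definition of the subterm relation,
`t` is of basic base type (w.r.t. the predicate `Basic`), and `fv t ⊆ fv s`. -/
def LC.Bsub {B F V : Type} (L : LC B F V) (Basic : B → Prop) (s t : L.Term) : Prop :=
  Relation.TransGen (fun a b => L.Nonversatile a ∧ LC.ISub L a b) s t ∧
  (∃ a, Basic a ∧ L.ty t = Ty.base a) ∧ L.fv t ⊆ L.fv s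

/-- `s ⊳ᵃ t`: `t` is accessible in `s`, i.e. `s = f(s₁,…,s_{ar f}) s_{ar f + 1} ⋯ sₙ`
for a function symbol `f : T₁ → ⋯ → Tₙ → a` and `s_j ⊵ᵃ t` for some `j ∈ Acc f`. -/
inductive LC.Asub {B F V : Type} (L : LC B F V) (Acc : F → Set ℕ) : L.Term → L.Term → Prop
  | base {f : F} {ts : List L.Term} {j : ℕ}
      (hlen : ts.length = ((L.tyF f).args).length) (har : L.arity f ≤ ts.length)
      (hbase : ∃ a, (L.tyF f).target = Ty.base a)
      (hty : ∀ i (hi : i < ts.length), L.ty (ts.get ⟨i, hi⟩) = (L.tyF f).args.get ⟨i, by omega⟩)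
      (hj : j ∈ Acc f) (hjl : j < ts.length) :
      LC.Asub L Acc (L.appList (L.fapp f (ts.take (L.arity f))) (ts.drop (L.arity f)))
        (ts.get ⟨j, hjl⟩)
  | step {f : F} {ts : List L.Term} {j : ℕ} {t : L.Term}
      (hlen : ts.length = ((L.tyF f).args).length) (har : L.arity f ≤ ts.length)
      (hbase : ∃ a, (L.tyF f).target = Ty.base a)
      (hty : ∀ i (hi : i < ts.length), L.ty (ts.get ⟨i, hi⟩) = (L.tyF f).args.get ⟨i, by omega⟩)
      (hj : j ∈ Acc f) (hjl : j < ts.length)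
      (h : LC.Asub L Acc (ts.get ⟨j, hjl⟩) t) :
      LC.Asub L Acc (L.appList (L.fapp f (ts.take (L.arity f))) (ts.drop (L.arity f))) t

/-- `s ⋟_X t`: `t` is structurally smaller than `s` with respect to the finite set `X`
of variables. -/
def LC.StructSm {B F V : Type} (L : LC B F V) (Acc : F → Set ℕ) (X : Finset V)
    (s t : L.Term) : Prop :=
  ∃ (a : B) (xs : List V) (u : L.Term),
    (∀ x ∈ xs, x ∈ X) ∧ L.ty s = Ty.base a ∧ L.ty t = Ty.base a ∧
    t = L.appList u (xs.map L.var) ∧ LC.Asub L Acc s u ∧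
    ∀ x ∈ xs, Ty.posOf a (L.tyV x) = ∅

/-- Basic coherence facts of the simply-typed lambda calculus modulo α-renaming,
relating typing, substitution, βη-reduction and βη-normal forms. -/
structure LCok {B F V : Type} (L : LC B F V) : Prop where
  nf_red : ∀ t, Relation.ReflTransGen L.be t (L.nf t)
  nf_NF : ∀ t, L.NF (L.nf t)
  NF_nf : ∀ t, L.NF t → L.nf t = t
  NF_iff : ∀ t, L.NF t ↔ ∀ s, ¬ L.be t s
  nf_unique : ∀ t s, Relation.ReflTransGen L.be t s → L.NF s → s = L.nf t
  ty_nf : ∀ t, L.ty (L.nf t) = L.ty t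
  ty_sapp : ∀ σ t, L.ty (L.sapp σ t) = L.ty t
  ty_var : ∀ x, L.ty (L.var x) = L.tyV x
  ty_fapp : ∀ f ts, ts.length = L.arity f → L.ty (L.fapp f ts) = (L.tyF f).dropArgs (L.arity f)
  ty_lam : ∀ x t, L.ty (L.lam x t) = Ty.arrow (L.tyV x) (L.ty t)
  sapp_fapp : ∀ σ f ts, L.sapp σ (L.fapp f ts) = L.fapp f (ts.map (L.sapp σ))
  sapp_app : ∀ σ u v, L.sapp σ (L.app u v) = L.app (L.sapp σ u) (L.sapp σ v)
  sapp_var : ∀ σ x, L.sapp σ (L.var x) = L.svar σ x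
  svar_not_dom : ∀ σ x, x ∉ L.dom σ → L.svar σ x = L.var x
  beta_root : ∀ x t u, L.ty u = L.tyV x → L.beta (L.app (L.lam x t) u) (L.sub1 t x u)
  eta_root : ∀ x u, x ∉ L.fv u → L.eta (L.lam x (L.app u (L.var x))) u
  sub1_notfree : ∀ t x u, x ∉ L.fv t → L.sub1 t x u = t
  sub1_var : ∀ x u, L.sub1 (L.var x) x u = u
  app_ctx : ∀ u, L.IsCtx fun w => L.app u w
  fv_finite : ∀ t, (L.fv t).Finite
  fresh : ∀ (S : Set V), S.Finite → ∀ T : Ty B, ∃ z, z ∉ S ∧ L.tyV z = T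


/-- The parameters of the (βη-normal) computability path order. -/
structure Params {B F V : Type} (L : LC B F V) where
  /-- the admissible order `≻_T` on simple types -/
  gtT : Ty B → Ty B → Prop
  /-- the precedence `≿_F` (a preorder on function symbols) -/
  precGe : F → F → Prop
  /-- the status of each function symbol: `true` = multiset, `false` = lexicographic -/
  stat : F → Bool
  /-- accessible arguments (0-indexed) -/
  acc : F → Set ℕ
  /-- basic base types -/
  basic : B → Prop
  /-- big function symbols (the small ones being the non-big ones) -/
  big : F → Prop

namespace Params

variable {B F V : Type} {L : LC B F V} (P : Params L)

/-- `⪰_T`, the reflexive closure of `≻_T`. -/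
def geT (S T : Ty B) : Prop := S = T ∨ P.gtT S T

/-- `τ(s) ⪰_T τ(t)`. -/
def tyGe (s t : L.Term) : Prop := P.geT (L.ty s) (L.ty t)

/-- `⋗ = (≻_T ∪ ⊳ₗ)⁺`. -/
def gtdot : Ty B → Ty B → Prop :=
  Relation.TransGen (fun S T => P.gtT S T ∨ Ty.LeftArg S T)

/-- `⋗` or equal. -/
def gedot (S T : Ty B) : Prop := S = T ∨ P.gtdot S T

/-- the strict part `≻_F` of the precedence -/
def precGt (f g : F) : Prop := P.precGe f g ∧ ¬ P.precGe g f

/-- the equivalence `≃_F` induced by the precedence -/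
def precEq (f g : F) : Prop := P.precGe f g ∧ P.precGe g f

end Params

mutual
/-- The generic computability path order `s >^X t` of Figure 1 of the paper, with the
rules F_b⊂, F_b=, F_b≻, F_b@, F_bλ, F_bV, @⊂, @=, @λ, @F_s, @V, λ⊂, λ⊂η, λ=, λ≠, λF_s,
λV, F_s⊂, F_s=, F_s≻, F_s@, F_sV.  The parameter `nv` is the nonversatility condition
imposed on every left-hand side (trivial for plain CPO, `Nonversatile` for NCPO), the
parameter `nft` is the βη-normality condition on right-hand sides (trivial for plain
CPO), and if `wbe = true` the additional rules @β and λη orienting β- and η-reduction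
are present (as for plain CPO). -/
inductive GenGt {B F V : Type} [DecidableEq V] (L : LC B F V) (P : Params L)
    (nv nft : L.Term → Prop) (wbe : Bool) : Finset V → L.Term → L.Term → Prop
  /- F_b⊂ -/
  | fbSub {X : Finset V} {f : F} {ts : List L.Term} {v : L.Term} (i : ℕ)
      (hi : i < ts.length) (t' t'' : L.Term)
      (hnv : nv (L.fapp f ts)) (hnft : nft v)
      (hlen : ts.length = L.arity f) (hbig : P.big f)
      (h1 : ts.get ⟨i, hi⟩ = t' ∨ LC.Bsub L P.basic (ts.get ⟨i, hi⟩) t')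
      (h2 : t' = t'' ∨ LC.Asub L P.acc t' t'')
      (h3 : GenGeTau L P nv nft wbe ∅ t'' v) :
      GenGt L P nv nft wbe X (L.fapp f ts) v
  /- F_b=, multiset status -/
  | fbEqMul {X : Finset V} {f g : F} {ts us : List L.Term}
      (hnv : nv (L.fapp f ts)) (hnft : nft (L.fapp g us))
      (hlt : ts.length = L.arity f) (hlu : us.length = L.arity g)
      (hbig : P.big f) (heq : P.precEq f g) (hstat : P.stat f = true)
      (hall : ∀ u ∈ us, GenGt L P nv nft wbe X (L.fapp f ts) u)
      (R Xm Ym : Multiset L.Term) (w : L.Term → L.Term)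
      (hXm : Xm ≠ 0) (hts : (ts : Multiset L.Term) = R + Xm)
      (hus : (us : Multiset L.Term) = R + Ym)
      (hw : ∀ y ∈ Ym, w y ∈ Xm)
      (hrel : ∀ y ∈ Ym, GenArgRel L P nv nft wbe X (w y) y) :
      GenGt L P nv nft wbe X (L.fapp f ts) (L.fapp g us)
  /- F_b=, lexicographic status -/
  | fbEqLex {X : Finset V} {f g : F} {ts us : List L.Term}
      (hnv : nv (L.fapp f ts)) (hnft : nft (L.fapp g us))
      (hlt : ts.length = L.arity f) (hlu : us.length = L.arity g)
      (hbig : P.big f) (heq : P.precEq f g) (hstat : P.stat f = false)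
      (hall : ∀ u ∈ us, GenGt L P nv nft wbe X (L.fapp f ts) u)
      (i : ℕ) (hit : i < ts.length) (hiu : i < us.length)
      (hrel : GenArgRel L P nv nft wbe X (ts.get ⟨i, hit⟩) (us.get ⟨i, hiu⟩))
      (hpre : ∀ j (hjt : j < ts.length) (hju : j < us.length), j < i →
        ts.get ⟨j, hjt⟩ = us.get ⟨j, hju⟩) :
      GenGt L P nv nft wbe X (L.fapp f ts) (L.fapp g us)
  /- F_b≻ -/
  | fbPrec {X : Finset V} {f g : F} {ts us : List L.Term}
      (hnv : nv (L.fapp f ts)) (hnft : nft (L.fapp g us))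
      (hlt : ts.length = L.arity f) (hlu : us.length = L.arity g)
      (hbig : P.big f) (hgt : P.precGt f g)
      (hall : ∀ u ∈ us, GenGt L P nv nft wbe X (L.fapp f ts) u) :
      GenGt L P nv nft wbe X (L.fapp f ts) (L.fapp g us)
  /- F_b@ -/
  | fbApp {X : Finset V} {f : F} {ts : List L.Term} {u v : L.Term}
      (hnv : nv (L.fapp f ts)) (hnft : nft (L.app u v))
      (hlen : ts.length = L.arity f) (hbig : P.big f)
      (h1 : GenGt L P nv nft wbe X (L.fapp f ts) u)
      (h2 : GenGt L P nv nft wbe X (L.fapp f ts) v) :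
      GenGt L P nv nft wbe X (L.fapp f ts) (L.app u v)
  /- F_bλ -/
  | fbLam {X : Finset V} {f : F} {ts : List L.Term} {y : V} {v : L.Term} (z : V)
      (hnv : nv (L.fapp f ts)) (hnft : nft (L.lam y v))
      (hlen : ts.length = L.arity f) (hbig : P.big f)
      (hty : L.tyV y = L.tyV z)
      (hz : z ∉ L.fv (L.fapp f ts) ∧ z ∉ L.fv (L.lam y v) ∧ z ∉ X)
      (h : GenGt L P nv nft wbe (insert z X) (L.fapp f ts) (L.sub1 v y (L.var z))) :
      GenGt L P nv nft wbe X (L.fapp f ts) (L.lam y v)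
  /- F_bV -/
  | fbVar {X : Finset V} {f : F} {ts : List L.Term} {y : V}
      (hnv : nv (L.fapp f ts)) (hnft : nft (L.var y))
      (hlen : ts.length = L.arity f) (hbig : P.big f) (hy : y ∈ X) :
      GenGt L P nv nft wbe X (L.fapp f ts) (L.var y)
  /- @⊂, first alternative: t ≥^X v -/
  | appSubL {X : Finset V} {t u v : L.Term}
      (hnv : nv (L.app t u)) (hnft : nft v)
      (h : GenGe L P nv nft wbe X t v) :
      GenGt L P nv nft wbe X (L.app t u) v
  /- @⊂, second alternative: u ≥_τ^X v -/
  | appSubR {X : Finset V} {t u v : L.Term}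
      (hnv : nv (L.app t u)) (hnft : nft v)
      (h : GenGeTau L P nv nft wbe X u v) :
      GenGt L P nv nft wbe X (L.app t u) v
  /- @=, first alternative: t = t' and u >^X u' -/
  | appEqL {X : Finset V} {t u u' : L.Term}
      (hnv : nv (L.app t u)) (hnft : nft (L.app t u'))
      (h : GenGt L P nv nft wbe X u u') :
      GenGt L P nv nft wbe X (L.app t u) (L.app t u')
  /- @=, second alternative: tu >_@^X t' and tu >_@^X u' -/
  | appEq {X : Finset V} {t u t' u' : L.Term}
      (hnv : nv (L.app t u)) (hnft : nft (L.app t' u'))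
      (h1 : GenGtAt L P nv nft wbe X t u t')
      (h2 : GenGtAt L P nv nft wbe X t u u') :
      GenGt L P nv nft wbe X (L.app t u) (L.app t' u')
  /- @λ -/
  | appLam {X : Finset V} {t u : L.Term} {y : V} {v : L.Term} (z : V)
      (hnv : nv (L.app t u)) (hnft : nft (L.lam y v))
      (hty : L.tyV y = L.tyV z)
      (hz : z ∉ L.fv (L.app t u) ∧ z ∉ L.fv (L.lam y v) ∧ z ∉ X)
      (h : GenGt L P nv nft wbe X (L.app t u) (L.sub1 v y (L.var z))) :
      GenGt L P nv nft wbe X (L.app t u) (L.lam y v)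
  /- @F_s -/
  | appFs {X : Finset V} {t u : L.Term} {f : F} {vs : List L.Term}
      (hnv : nv (L.app t u)) (hnft : nft (L.fapp f vs))
      (hlen : vs.length = L.arity f) (hsmall : ¬ P.big f)
      (hall : ∀ v' ∈ vs, GenGtTau L P nv nft wbe X (L.app t u) v') :
      GenGt L P nv nft wbe X (L.app t u) (L.fapp f vs)
  /- @V -/
  | appVar {X : Finset V} {t u : L.Term} {y : V}
      (hnv : nv (L.app t u)) (hnft : nft (L.var y)) (hy : y ∈ X) :
      GenGt L P nv nft wbe X (L.app t u) (L.var y)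
  /- λ⊂ -/
  | lamSub {X : Finset V} {x : V} {t v : L.Term} (z : V)
      (hnv : nv (L.lam x t)) (hnft : nft v)
      (hty : L.tyV x = L.tyV z)
      (hz : z ∉ L.fv (L.lam x t) ∧ z ∉ L.fv v ∧ z ∉ X)
      (h : GenGeTau L P nv nft wbe X (L.sub1 t x (L.var z)) v) :
      GenGt L P nv nft wbe X (L.lam x t) v
  /- λ⊂η -/
  | lamSubEta {X : Finset V} {x : V} {t v : L.Term} (z : V)
      (hnv : nv (L.lam x t)) (hnft : nft v)
      (hty : L.tyV x = L.tyV z)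
      (hz : z ∉ L.fv (L.lam x t) ∧ z ∉ L.fv v ∧ z ∉ X)
      (h : GenGeTau L P nv nft wbe X (L.sub1 t x (L.var z)) (L.app v (L.var z))) :
      GenGt L P nv nft wbe X (L.lam x t) v
  /- λ= -/
  | lamEq {X : Finset V} {x y : V} {t v : L.Term} (z : V)
      (hnv : nv (L.lam x t)) (hnft : nft (L.lam y v))
      (htx : L.tyV x = L.tyV z) (hty : L.tyV y = L.tyV z)
      (hz : z ∉ L.fv (L.lam x t) ∧ z ∉ L.fv (L.lam y v) ∧ z ∉ X)
      (h : GenGt L P nv nft wbe X (L.sub1 t x (L.var z)) (L.sub1 v y (L.var z))) :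
      GenGt L P nv nft wbe X (L.lam x t) (L.lam y v)
  /- λ≠ -/
  | lamNe {X : Finset V} {x y : V} {t v : L.Term} (z : V)
      (hnv : nv (L.lam x t)) (hnft : nft (L.lam y v))
      (hne : L.tyV x ≠ L.tyV y) (hty : L.tyV y = L.tyV z)
      (hz : z ∉ L.fv (L.lam x t) ∧ z ∉ L.fv (L.lam y v) ∧ z ∉ X)
      (h : GenGt L P nv nft wbe X (L.lam x t) (L.sub1 v y (L.var z))) :
      GenGt L P nv nft wbe X (L.lam x t) (L.lam y v)
  /- λF_s -/
  | lamFs {X : Finset V} {x : V} {t : L.Term} {f : F} {vs : List L.Term}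
      (hnv : nv (L.lam x t)) (hnft : nft (L.fapp f vs))
      (hlen : vs.length = L.arity f) (hsmall : ¬ P.big f)
      (hall : ∀ v' ∈ vs, GenGtTau L P nv nft wbe X (L.lam x t) v') :
      GenGt L P nv nft wbe X (L.lam x t) (L.fapp f vs)
  /- λV -/
  | lamVar {X : Finset V} {x : V} {t : L.Term} {y : V}
      (hnv : nv (L.lam x t)) (hnft : nft (L.var y)) (hy : y ∈ X) :
      GenGt L P nv nft wbe X (L.lam x t) (L.var y)
  /- F_s⊂ -/
  | fsSub {X : Finset V} {f : F} {ts : List L.Term} {v : L.Term} (i : ℕ)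
      (hi : i < ts.length)
      (hnv : nv (L.fapp f ts)) (hnft : nft v)
      (hlen : ts.length = L.arity f) (hsmall : ¬ P.big f)
      (h : GenGeTau L P nv nft wbe ∅ (ts.get ⟨i, hi⟩) v) :
      GenGt L P nv nft wbe X (L.fapp f ts) v
  /- F_s=, multiset status -/
  | fsEqMul {X : Finset V} {f g : F} {ts us : List L.Term}
      (hnv : nv (L.fapp f ts)) (hnft : nft (L.fapp g us))
      (hlt : ts.length = L.arity f) (hlu : us.length = L.arity g)
      (hsmall : ¬ P.big f) (heq : P.precEq f g) (hstat : P.stat f = true)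
      (hall : ∀ u ∈ us, GenGtTau L P nv nft wbe X (L.fapp f ts) u)
      (R Xm Ym : Multiset L.Term) (w : L.Term → L.Term)
      (hXm : Xm ≠ 0) (hts : (ts : Multiset L.Term) = R + Xm)
      (hus : (us : Multiset L.Term) = R + Ym)
      (hw : ∀ y ∈ Ym, w y ∈ Xm)
      (hrel : ∀ y ∈ Ym, GenGtTau L P nv nft wbe ∅ (w y) y) :
      GenGt L P nv nft wbe X (L.fapp f ts) (L.fapp g us)
  /- F_s=, lexicographic status -/
  | fsEqLex {X : Finset V} {f g : F} {ts us : List L.Term}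
      (hnv : nv (L.fapp f ts)) (hnft : nft (L.fapp g us))
      (hlt : ts.length = L.arity f) (hlu : us.length = L.arity g)
      (hsmall : ¬ P.big f) (heq : P.precEq f g) (hstat : P.stat f = false)
      (hall : ∀ u ∈ us, GenGtTau L P nv nft wbe X (L.fapp f ts) u)
      (i : ℕ) (hit : i < ts.length) (hiu : i < us.length)
      (hrel : GenGtTau L P nv nft wbe ∅ (ts.get ⟨i, hit⟩) (us.get ⟨i, hiu⟩))
      (hpre : ∀ j (hjt : j < ts.length) (hju : j < us.length), j < i →
        ts.get ⟨j, hjt⟩ = us.get ⟨j, hju⟩) :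
      GenGt L P nv nft wbe X (L.fapp f ts) (L.fapp g us)
  /- F_s≻ -/
  | fsPrec {X : Finset V} {f g : F} {ts us : List L.Term}
      (hnv : nv (L.fapp f ts)) (hnft : nft (L.fapp g us))
      (hlt : ts.length = L.arity f) (hlu : us.length = L.arity g)
      (hsmall : ¬ P.big f) (hgt : P.precGt f g)
      (hall : ∀ u ∈ us, GenGtTau L P nv nft wbe X (L.fapp f ts) u) :
      GenGt L P nv nft wbe X (L.fapp f ts) (L.fapp g us)
  /- F_s@ -/
  | fsApp {X : Finset V} {f : F} {ts : List L.Term} {u v : L.Term}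
      (hnv : nv (L.fapp f ts)) (hnft : nft (L.app u v))
      (hlen : ts.length = L.arity f) (hsmall : ¬ P.big f)
      (h1 : GenGtTau L P nv nft wbe X (L.fapp f ts) u)
      (h2 : GenGtTau L P nv nft wbe X (L.fapp f ts) v) :
      GenGt L P nv nft wbe X (L.fapp f ts) (L.app u v)
  /- F_sV -/
  | fsVar {X : Finset V} {f : F} {ts : List L.Term} {y : V}
      (hnv : nv (L.fapp f ts)) (hnft : nft (L.var y))
      (hlen : ts.length = L.arity f) (hsmall : ¬ P.big f) (hy : y ∈ X) :
      GenGt L P nv nft wbe X (L.fapp f ts) (L.var y)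
  /- @β (only for plain CPO) -/
  | betaR {X : Finset V} {s t : L.Term} (hwbe : wbe = true) (h : L.beta s t) :
      GenGt L P nv nft wbe X s t
  /- λη (only for plain CPO) -/
  | etaR {X : Finset V} {s t : L.Term} (hwbe : wbe = true) (h : L.eta s t) :
      GenGt L P nv nft wbe X s t

/-- `s >^X_τ t`, i.e. `s >^X t` together with `τ(s) ⪰_T τ(t)`. -/
inductive GenGtTau {B F V : Type} [DecidableEq V] (L : LC B F V) (P : Params L)
    (nv nft : L.Term → Prop) (wbe : Bool) : Finset V → L.Term → L.Term → Prop
  | mk {X : Finset V} {s t : L.Term} (h : GenGt L P nv nft wbe X s t)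
      (hty : P.tyGe s t) : GenGtTau L P nv nft wbe X s t

/-- `s ≥^X t`, the reflexive closure of `>^X`. -/
inductive GenGe {B F V : Type} [DecidableEq V] (L : LC B F V) (P : Params L)
    (nv nft : L.Term → Prop) (wbe : Bool) : Finset V → L.Term → L.Term → Prop
  | refl {X : Finset V} {t : L.Term} : GenGe L P nv nft wbe X t t
  | of {X : Finset V} {s t : L.Term} (h : GenGt L P nv nft wbe X s t) :
      GenGe L P nv nft wbe X s t

/-- `s ≥^X_τ t`, the reflexive closure of `>^X_τ`. -/
inductive GenGeTau {B F V : Type} [DecidableEq V] (L : LC B F V) (P : Params L)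
    (nv nft : L.Term → Prop) (wbe : Bool) : Finset V → L.Term → L.Term → Prop
  | refl {X : Finset V} {t : L.Term} : GenGeTau L P nv nft wbe X t t
  | of {X : Finset V} {s t : L.Term} (h : GenGtTau L P nv nft wbe X s t) :
      GenGeTau L P nv nft wbe X s t

/-- `tu >_@^X v`, the auxiliary relation of rule @=:
`t >_τ^X v` or `u ≥_τ^X v` or `tu >_τ^X v`. -/
inductive GenGtAt {B F V : Type} [DecidableEq V] (L : LC B F V) (P : Params L)
    (nv nft : L.Term → Prop) (wbe : Bool) : Finset V → L.Term → L.Term → L.Term → Prop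
  | l {X : Finset V} {t u v : L.Term} (h : GenGtTau L P nv nft wbe X t v) :
      GenGtAt L P nv nft wbe X t u v
  | r {X : Finset V} {t u v : L.Term} (h : GenGeTau L P nv nft wbe X u v) :
      GenGtAt L P nv nft wbe X t u v
  | app {X : Finset V} {t u v : L.Term} (h : GenGtTau L P nv nft wbe X (L.app t u) v) :
      GenGtAt L P nv nft wbe X t u v

/-- The argument comparison `>_τ ∪ (⋟_X · ≥_τ)` of rule F_b=. -/
inductive GenArgRel {B F V : Type} [DecidableEq V] (L : LC B F V) (P : Params L)
    (nv nft : L.Term → Prop) (wbe : Bool) : Finset V → L.Term → L.Term → Prop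
  | tau {X : Finset V} {a b : L.Term} (h : GenGtTau L P nv nft wbe ∅ a b) :
      GenArgRel L P nv nft wbe X a b
  | struct {X : Finset V} {a b : L.Term} (c : L.Term)
      (h1 : LC.StructSm L P.acc X a c) (h2 : GenGeTau L P nv nft wbe ∅ c b) :
      GenArgRel L P nv nft wbe X a b
end

/-- NCPO: the βη-normal computability path order `>^X`. -/
def NGt {B F V : Type} [DecidableEq V] (L : LC B F V) (P : Params L) :
    Finset V → L.Term → L.Term → Prop :=
  GenGt L P L.Nonversatile L.NF false

/-- `>^X_τ` for NCPO. -/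
def NGtTau {B F V : Type} [DecidableEq V] (L : LC B F V) (P : Params L) (X : Finset V)
    (s t : L.Term) : Prop :=
  NGt L P X s t ∧ P.tyGe s t

/-- CPO with accessible subterms and small symbols, `⊐^X`. -/
def CGt {B F V : Type} [DecidableEq V] (L : LC B F V) (P : Params L) :
    Finset V → L.Term → L.Term → Prop :=
  GenGt L P (fun _ => True) (fun _ => True) true

/-- `⊐^X_τ` for CPO. -/
def CGtTau {B F V : Type} [DecidableEq V] (L : LC B F V) (P : Params L) (X : Finset V)
    (s t : L.Term) : Prop :=
  CGt L P X s t ∧ P.tyGe s t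

/-- NCPO `>_τ = >^∅_τ`. -/
def NCpo {B F V : Type} [DecidableEq V] (L : LC B F V) (P : Params L) : L.Term → L.Term → Prop :=
  NGtTau L P ∅

/-- CPO `⊐_τ = ⊐^∅_τ`. -/
def Cpo {B F V : Type} [DecidableEq V] (L : LC B F V) (P : Params L) : L.Term → L.Term → Prop :=
  CGtTau L P ∅


/-- The conditions on the admissible type order `≻_T`, on the accessible argument
sets `Acc(f)` and on the basic base types. -/
structure AccOk {B F V : Type} (L : LC B F V) (P : Params L) : Prop where
  /-- `⊳ᵣ ⊆ ≻_T` -/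
  admRight : ∀ T U : Ty B, P.gtT (Ty.arrow T U) U
  /-- `⋗ = (≻_T ∪ ⊳ₗ)⁺` is well-founded -/
  admWF : WellFounded (fun S T => P.gtdot T S)
  /-- if `T → U ≻_T W` then `U ⪰_T W` or `W = T → U'` with `U ≻_T U'` -/
  admArrow : ∀ T U W, P.gtT (Ty.arrow T U) W →
      P.geT U W ∨ ∃ U', W = Ty.arrow T U' ∧ P.gtT U U'
  /-- a function symbol of type `T₁ → ⋯ → Tₙ → a` has arity at most `n` -/
  arity_le : ∀ f : F, L.arity f ≤ ((L.tyF f).args).length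
  /-- the defining conditions on accessible arguments -/
  accOk : ∀ f : F, ∀ i ∈ P.acc f, ∃ a, (L.tyF f).target = Ty.base a ∧
      ∃ hi : i < ((L.tyF f).args).length,
        (∀ b ∈ Ty.basesIn (((L.tyF f).args).get ⟨i, hi⟩), P.gedot (Ty.base a) (Ty.base b)) ∧
        Ty.posOf a (((L.tyF f).args).get ⟨i, hi⟩) ⊆ Ty.posP (((L.tyF f).args).get ⟨i, hi⟩)
  /-- the defining conditions on basic base types -/
  basicOk : ∀ a, P.basic a →
      (∀ T, P.gtT (Ty.base a) T → ∃ b, T = Ty.base b ∧ P.basic b) ∧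
      (∀ f : F, (L.tyF f).target = Ty.base a → ∀ i ∈ P.acc f,
        ∀ hi : i < ((L.tyF f).args).length,
          ((L.tyF f).args).get ⟨i, hi⟩ = Ty.base a ∨
          ∃ b, ((L.tyF f).args).get ⟨i, hi⟩ = Ty.base b ∧ P.basic b)

/-- All conditions imposed on the parameters of (N)CPO: an admissible type order,
accessible arguments, basic base types, a precedence with well-founded strict part,
statuses constant on equivalence classes, and the conditions on small symbols. -/
structure GoodParams {B F V : Type} (L : LC B F V) (P : Params L)
    extends AccOk L P : Prop where
  /-- the precedence is reflexive -/
  precRefl : ∀ f, P.precGe f f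
  /-- the precedence is transitive -/
  precTrans : ∀ f g h, P.precGe f g → P.precGe g h → P.precGe f h
  /-- the strict part `≻_F` of the precedence is well-founded -/
  precWF : WellFounded (fun g f => P.precGt f g)
  /-- equivalent symbols have the same status -/
  statEq : ∀ f g, P.precEq f g → P.stat f = P.stat g
  /-- if `f ≿_F g` and `g` is big then `f` is big -/
  bigUp : ∀ f g, P.precGe f g → P.big g → P.big f
  /-- the typing conditions on small symbols -/
  smallOk : ∀ f : F, ¬ P.big f → ∃ a, (L.tyF f).target = Ty.base a ∧
      ((L.arity f = ((L.tyF f).args).length →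
        ∀ T ∈ (L.tyF f).args,
          (∀ b ∈ Ty.basesIn T, P.gedot (Ty.base a) (Ty.base b)) ∧ Ty.spos a T = ∅) ∧
       (L.arity f < ((L.tyF f).args).length →
        P.acc f = ∅ ∧
        ∀ i (hi : i < L.arity f) (hi' : i < ((L.tyF f).args).length),
          (∀ b ∈ Ty.basesIn (((L.tyF f).args).get ⟨i, hi'⟩),
            P.gedot (Ty.base a) (Ty.base b)) ∧
          P.gedot ((L.tyF f).dropArgs (L.arity f)) (((L.tyF f).args).get ⟨i, hi'⟩)))

/-- A βη-normal higher-order reduction order (Definition 2): a pair `(>, ⊐)` such that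
`⊐` is well-founded and monotone, `→β ∪ →η ⊆ ⊐`, and `s > t` implies `sσ↓ ⊐⁺ tσ↓`
for all βη-normal `s`, `t` and all substitutions `σ` (βη-normal stability). -/
structure RedOrder {B F V : Type} (L : LC B F V)
    (gt sq : L.Term → L.Term → Prop) : Prop where
  /-- `⊐` is well-founded -/
  wf : WellFounded (fun t s => sq s t)
  /-- `⊐` is monotone (closed under contexts) -/
  mono : ∀ C, L.IsCtx C → ∀ s t, sq s t → sq (C s) (C t)
  /-- `→β ⊆ ⊐` -/
  beta_sub : ∀ s t, L.beta s t → sq s t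
  /-- `→η ⊆ ⊐` -/
  eta_sub : ∀ s t, L.eta s t → sq s t
  /-- βη-normal stability -/
  stable : ∀ s t, L.NF s → L.NF t → gt s t →
      ∀ σ : L.Sub, Relation.TransGen sq (L.nf (L.sapp σ s)) (L.nf (L.sapp σ t))

/-- A rewrite rule `ℓ → r`: both sides are βη-normal, `ℓ` is not of the form
`x s₁ ⋯ sₙ`, both sides have the same type and `fv r ⊆ fv ℓ`. -/
def IsRule {B F V : Type} (L : LC B F V) (l r : L.Term) : Prop :=
  L.NF l ∧ L.NF r ∧ (¬ ∃ (x : V) (ss : List L.Term), l = L.appList (L.var x) ss) ∧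
  L.ty l = L.ty r ∧ L.fv r ⊆ L.fv l

/-- The rewrite relation `→_R` of an HRS `R`:  `s →_R t` if there are a rule
`ℓ → r ∈ R`, a substitution `σ` and a context `C` with `s = C[ℓσ↓] ∈ nf_βη` and
`t = C[rσ↓]↓`. -/
def Rstep {B F V : Type} (L : LC B F V) (R : Set (L.Term × L.Term))
    (s t : L.Term) : Prop :=
  ∃ p ∈ R, ∃ (σ : L.Sub) (C : L.Term → L.Term), L.IsCtx C ∧
    s = C (L.nf (L.sapp σ p.1)) ∧ L.NF s ∧ t = L.nf (C (L.nf (L.sapp σ p.2)))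

end HRS

/-- The smallest order on simple types containing a given order `≻_B` on base types
and the right argument relation `⊳ᵣ` such that `V ≻_T V'` implies
`U → V ≻_T U → V'` for all `U`, `V`, `V'`. -/
inductive TyGt {B : Type} (gtB : B → B → Prop) : HRS.Ty B → HRS.Ty B → Prop
  | base {a b : B} : gtB a b → TyGt gtB (.base a) (.base b)
  | right (T U : HRS.Ty B) : TyGt gtB (.arrow T U) U
  | congr {U V V' : HRS.Ty B} : TyGt gtB V V' → TyGt gtB (.arrow U V) (.arrow U V')
  | trans {S T U : HRS.Ty B} : TyGt gtB S T → TyGt gtB T U → TyGt gtB S U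

open HRS in
lemma TyGt.inv_base {B : Type} {gtB : B → B → Prop} {S W : Ty B}
    (h : TyGt gtB S W) : ∀ a, S = Ty.base a →
      ∃ b, W = Ty.base b ∧ Relation.TransGen gtB a b := by
  induction h with
  | base hab => intro a ha; cases ha; exact ⟨_, rfl, Relation.TransGen.single hab⟩
  | right T U => intro a ha; cases ha
  | congr h ih => intro a ha; cases ha
  | trans h1 h2 ih1 ih2 =>
    intro a ha
    obtain ⟨b, rfl, hb⟩ := ih1 a ha
    obtain ⟨c, rfl, hc⟩ := ih2 b rfl
    exact ⟨c, rfl, hb.trans hc⟩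

open HRS in
lemma TyGt.inv_arrow {B : Type} {gtB : B → B → Prop} {S W : Ty B}
    (h : TyGt gtB S W) : ∀ T U, S = Ty.arrow T U →
      (U = W ∨ TyGt gtB U W) ∨ ∃ U', W = Ty.arrow T U' ∧ TyGt gtB U U' := by
  induction h with
  | base hab => intro T U hTU; cases hTU
  | right T' U' => intro T U hTU; cases hTU; exact Or.inl (Or.inl rfl)
  | congr h ih => intro T U hTU; cases hTU; exact Or.inr ⟨_, rfl, h⟩
  | trans h1 h2 ih1 ih2 =>
    intro T U hTU
    rcases ih1 T U hTU with (rfl | hUT') | ⟨U', rfl, hUU'⟩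
    · exact Or.inl (Or.inr h2)
    · exact Or.inl (Or.inr (hUT'.trans h2))
    · rcases ih2 T U' rfl with (rfl | hU'W) | ⟨U'', rfl, hU'U''⟩
      · exact Or.inl (Or.inr hUU')
      · exact Or.inl (Or.inr (hUU'.trans hU'W))
      · exact Or.inr ⟨U'', rfl, hUU'.trans hU'U''⟩

open HRS in
lemma TyGt.acc_arrow {B : Type} {gtB : B → B → Prop} {T U : Ty B}
    (hT : Acc (fun S T => TyGt gtB T S ∨ Ty.LeftArg T S) T)
    (hU : Acc (fun S T => TyGt gtB T S ∨ Ty.LeftArg T S) U) :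
    Acc (fun S T => TyGt gtB T S ∨ Ty.LeftArg T S) (Ty.arrow T U) := by
  induction hU with
  | intro U hU ih =>
    refine Acc.intro _ ?_
    rintro S (hgt | ⟨V, hV⟩)
    · rcases TyGt.inv_arrow hgt T U rfl with (rfl | hUS) | ⟨U', rfl, hUU'⟩
      · exact Acc.intro _ hU
      · exact hU S (Or.inl hUS)
      · exact ih U' (Or.inl hUU')
    · cases hV; exact hT

open HRS in
lemma TyGt.acc_all {B : Type} {gtB : B → B → Prop}
    (hwf : WellFounded (fun a b => gtB b a)) (T : Ty B) :
    Acc (fun S T => TyGt gtB T S ∨ Ty.LeftArg T S) T := by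
  induction T with
  | base a =>
    have : Acc (fun a b => Relation.TransGen gtB b a) a :=
      Subrelation.accessible (fun {x y} h => Relation.transGen_swap.mpr h)
        ((hwf.transGen).apply a)
    induction this with
    | intro a _ ih =>
      refine Acc.intro _ ?_
      rintro S (hgt | ⟨V, hV⟩)
      · obtain ⟨b, rfl, hb⟩ := TyGt.inv_base hgt a rfl
        exact ih b hb
      · cases hV
  | arrow T U ihT ihU => exact TyGt.acc_arrow ihT ihU

open HRS in
/-- **Lemma 2** (Lemma 2.3 from BJR15).  Given a well-founded order `≻_B` on base
types, the smallest order `≻_T` containing `≻_B` and `⊳ᵣ` that is closed under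
`V ≻_T V' ⟹ U → V ≻_T U → V'` is admissible:  `⊳ᵣ ⊆ ≻_T`,
`⋗ = (≻_T ∪ ⊳ₗ)⁺` is well-founded, and `T → U ≻_T W` implies `U ⪰_T W` or
`W = T → U'` with `U ≻_T U'`. -/
theorem admissible_type_order {B : Type} (gtB : B → B → Prop)
    (hwf : WellFounded (fun a b => gtB b a)) :
    (∀ T U : Ty B, TyGt gtB (.arrow T U) U) ∧
    WellFounded (fun S T =>
      Relation.TransGen (fun A C => TyGt gtB A C ∨ Ty.LeftArg A C) T S) ∧
    (∀ T U W : Ty B, TyGt gtB (.arrow T U) W →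
      (U = W ∨ TyGt gtB U W) ∨ ∃ U', W = Ty.arrow T U' ∧ TyGt gtB U U') := by
  refine ⟨fun T U => TyGt.right T U, ?_, fun T U W h => ?_⟩
  · have hwf' : WellFounded (fun S T => TyGt gtB T S ∨ Ty.LeftArg T S) :=
      ⟨TyGt.acc_all hwf⟩
    have := hwf'.transGen
    exact Subrelation.wf (fun {S T} h => (Relation.transGen_swap).mpr h) this
  · exact TyGt.inv_arrow h T U rfl
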